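/- Let λ₁ ≥ … ≥ λ_m ≥ 0 be a nonincreasing nonnegative sequence with at least one nonzero element, let I = {I_1,…,I_m} be a partition of {1,…,p}, let W = diag(w₁,…,w_m) with all w_i > 0, and define J_{λ,I,W}(b) = J_λ(W ⟦b⟧_I) for b ∈ ℝ^p. Then the convex conjugate J*_{λ,I,W}(x) = sup_{b ∈ ℝ^p} (xᵀb − J_{λ,I,W}(b)), taking values in the extended reals, equals 0 if W⁻¹ ⟦x⟧_I ∈ C_λ and equals +∞ otherwise. -/

import Mathlib

open Finset

/-- The nonincreasing rearrangement of the absolute values of the coordinates of `b`. -/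
noncomputable def sortedAbs {p : ℕ} (b : Fin p → ℝ) : Fin p → ℝ :=
  fun i => |b (Tuple.sort (fun j => |b j|) (Fin.rev i))|

/-- The sorted ℓ₁ norm `J_λ(b) = Σ_i λ_i |b|_{(i)}`. -/
noncomputable def Jlam {p : ℕ} (lam b : Fin p → ℝ) : ℝ :=
  ∑ i, lam i * sortedAbs b i

/-- The unit ball of the dual of the sorted ℓ₁ norm:
`C_λ = {c : Σ_{i=1}^k |c|_{(i)} ≤ Σ_{i=1}^k λ_i for every k}`. -/
noncomputable def Cset {m : ℕ} (lam : Fin m → ℝ) : Set (Fin m → ℝ) :=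
  {c | ∀ k : Fin m,
    ∑ i ∈ univ.filter (fun i => i ≤ k), sortedAbs c i ≤
      ∑ i ∈ univ.filter (fun i => i ≤ k), lam i}

/-- `groupNorm grp b i = ‖b_{I_i}‖₂`, the Euclidean norm of the restriction of `b` to the
`i`-th group of the partition encoded by `grp`. -/
noncomputable def groupNorm {p m : ℕ} (grp : Fin p → Fin m) (b : Fin p → ℝ)
    (i : Fin m) : ℝ :=
  Real.sqrt (∑ j ∈ univ.filter (fun j => grp j = i), b j ^ 2)

/-!
`b ↦ J_λ(W⟦b⟧_I)` is positively homogeneous, so its conjugate only takes the values `0` and `+∞`,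
according as `xᵀb ≤ J_λ(W⟦b⟧_I)` for every `b` or not. Cauchy–Schwarz on each group bounds `xᵀb`
by `Σ_t c_t d_t` with `c = W⁻¹⟦x⟧_I` and `d = W⟦b⟧_I`; the rearrangement inequality and Abel
summation against the nonincreasing sequence `|d|_(i)` bound this by `J_λ(d)` when `c ∈ C_λ`.
If instead the `k`-th partial-sum constraint of `C_λ` fails, aligning `b` with `x` on the groups of
the `k + 1` largest `c_t`, scaled so that `d` is their indicator, gives
`xᵀb = Σ_{i ≤ k} |c|_(i) > Σ_{i ≤ k} λ_i ≥ J_λ(d)`.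
-/

theorem Tuple.sort_comp_strictMono {n : ℕ} {α β : Type*} [LinearOrder α] [LinearOrder β]
    {φ : α → β} (hφ : StrictMono φ) (f : Fin n → α) : Tuple.sort (φ ∘ f) = Tuple.sort f :=
  (Tuple.eq_sort_iff.mpr ⟨hφ.monotone.comp (Tuple.monotone_sort f),
    fun i j hij h => (Tuple.eq_sort_iff.mp rfl).2 i j hij (hφ.injective h)⟩).symm

section SortedAbs

variable {n : ℕ}

theorem exists_perm_sortedAbs_eq (b : Fin n → ℝ) :
    ∃ σ : Equiv.Perm (Fin n), ∀ i, sortedAbs b i = |b (σ i)| :=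
  ⟨Fin.revPerm.trans (Tuple.sort fun j => |b j|), fun _ => rfl⟩

theorem sortedAbs_nonneg (b : Fin n → ℝ) (i : Fin n) : 0 ≤ sortedAbs b i :=
  abs_nonneg _

theorem antitone_sortedAbs (b : Fin n → ℝ) : Antitone (sortedAbs b) :=
  fun _ _ hij => Tuple.monotone_sort (fun j => |b j|) (Fin.rev_le_rev.mpr hij)

theorem sortedAbs_smul (t : ℝ) (b : Fin n → ℝ) : sortedAbs (t • b) = |t| • sortedAbs b := by
  rcases eq_or_ne t 0 with rfl | ht
  · ext i
    simp [sortedAbs]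
  · have hsort : Tuple.sort (fun j => |t| * |b j|) = Tuple.sort fun j => |b j| :=
      Tuple.sort_comp_strictMono (strictMono_mul_left_of_pos (abs_pos.mpr ht)) _
    ext i
    simp [sortedAbs, hsort, abs_mul]

theorem sortedAbs_le_of_abs_le {b : Fin n → ℝ} {M : ℝ} (hb : ∀ j, |b j| ≤ M) (i : Fin n) :
    sortedAbs b i ≤ M :=
  hb _

theorem sortedAbs_eq_zero_of_card_support_le {b : Fin n → ℝ} {i : Fin n}
    (hi : #{j | b j ≠ 0} ≤ i) : sortedAbs b i = 0 := by
  obtain ⟨σ, hσ⟩ := exists_perm_sortedAbs_eq b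
  have hcard : #{j | 0 < sortedAbs b j} = #{j | b j ≠ 0} :=
    card_equiv σ fun j => by simp [hσ]
  by_contra hne
  have hlt := (Tuple.lt_card_gt_iff_apply_gt_of_antitone (antitone_sortedAbs b)).mpr
    ((sortedAbs_nonneg b i).lt_of_ne' hne)
  rw [hcard] at hlt
  omega

theorem sum_abs_mul_abs_le_sum_sortedAbs_mul (c d : Fin n → ℝ) :
    ∑ i, |c i| * |d i| ≤ ∑ i, sortedAbs c i * sortedAbs d i := by
  obtain ⟨σ, hσ⟩ := exists_perm_sortedAbs_eq c
  obtain ⟨ρ, hρ⟩ := exists_perm_sortedAbs_eq d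
  calc ∑ i, |c i| * |d i| = ∑ i, sortedAbs c i * sortedAbs d ((σ.trans ρ.symm) i) := by
        rw [← Equiv.sum_comp σ]
        simp [hσ, hρ]
    _ ≤ _ := ((antitone_sortedAbs c).monovary (antitone_sortedAbs d)).sum_mul_comp_perm_le_sum_mul

end SortedAbs

theorem Finset.sum_mul_nonneg_of_antitoneOn {ι R : Type*} [LinearOrder ι] [CommRing R]
    [LinearOrder R] [IsStrictOrderedRing R] (s : Finset ι) {f e : ι → R}
    (hf : ∀ k ∈ s, 0 ≤ ∑ i ∈ s with i ≤ k, f i) (he : AntitoneOn e s)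
    (he₀ : ∀ i ∈ s, 0 ≤ e i) : 0 ≤ ∑ i ∈ s, f i * e i := by
  induction s using Finset.induction_on_max generalizing e with
  | empty => simp
  | insert a s hlt ih =>
    have ha : a ∉ s := fun h => (hlt a h).false
    have hsplit : ∑ i ∈ insert a s, f i * e i =
        ∑ i ∈ s, f i * (e i - e a) + e a * ∑ i ∈ insert a s, f i := by
      simp only [sum_insert ha, mul_sub, sum_sub_distrib, ← sum_mul]
      ring
    have hprefix : ∀ k ∈ s, ∑ i ∈ s with i ≤ k, f i = ∑ i ∈ insert a s with i ≤ k, f i := by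
      intro k hk
      rw [filter_insert, if_neg (hlt k hk).not_ge]
    have htotal : ∑ i ∈ insert a s, f i = ∑ i ∈ insert a s with i ≤ a, f i := by
      rw [filter_true_of_mem]
      simpa using fun i hi => (hlt i hi).le
    rw [hsplit]
    refine add_nonneg (ih (fun k hk => ?_) (fun i hi j hj hij => ?_) fun i hi => ?_) ?_
    · rw [hprefix k hk]
      exact hf k (mem_insert_of_mem hk)
    · exact sub_le_sub_right (he (mem_insert_of_mem hi) (mem_insert_of_mem hj) hij) _
    · exact sub_nonneg.mpr (he (mem_insert_of_mem hi) (mem_insert_self a s) (hlt i hi).le)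
    · exact mul_nonneg (he₀ a (mem_insert_self a s)) (htotal ▸ hf a (mem_insert_self a s))

section Jlam

variable {n : ℕ}

theorem Jlam_smul (lam d : Fin n → ℝ) (t : ℝ) : Jlam lam (t • d) = |t| * Jlam lam d := by
  simp only [Jlam, sortedAbs_smul, Pi.smul_apply, smul_eq_mul, mul_sum]
  exact sum_congr rfl fun i _ => by ring

theorem sum_mul_le_Jlam_of_mem_Cset {lam c : Fin n → ℝ} (hc : c ∈ Cset lam) (d : Fin n → ℝ) :
    ∑ i, c i * d i ≤ Jlam lam d := by
  have habel : 0 ≤ ∑ i, (lam i - sortedAbs c i) * sortedAbs d i :=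
    univ.sum_mul_nonneg_of_antitoneOn (fun k _ => by simpa [sum_sub_distrib] using hc k)
      ((antitone_sortedAbs d).antitoneOn _) fun i _ => sortedAbs_nonneg d i
  rw [← sub_nonneg]
  calc 0 ≤ ∑ i, (lam i - sortedAbs c i) * sortedAbs d i := habel
    _ = Jlam lam d - ∑ i, sortedAbs c i * sortedAbs d i := by
      simp only [Jlam, sub_mul, sum_sub_distrib]
    _ ≤ Jlam lam d - ∑ i, |c i| * |d i| :=
      sub_le_sub_left (sum_abs_mul_abs_le_sum_sortedAbs_mul c d) _
    _ ≤ Jlam lam d - ∑ i, c i * d i :=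
      sub_le_sub_left (sum_le_sum fun i _ => (le_abs_self _).trans (abs_mul _ _).le) _

theorem Jlam_le_sum_of_card_support_le {lam d : Fin n → ℝ} (hlam : ∀ i, 0 ≤ lam i)
    (hd : ∀ j, |d j| ≤ 1) {k : Fin n} (hcard : #{j | d j ≠ 0} ≤ k + 1) :
    Jlam lam d ≤ ∑ i with i ≤ k, lam i := by
  rw [Jlam, sum_filter]
  refine sum_le_sum fun i _ => ?_
  split_ifs with hik
  · exact mul_le_of_le_one_right (hlam i) (sortedAbs_le_of_abs_le hd i)
  · rw [not_le, Fin.lt_def] at hik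
    rw [sortedAbs_eq_zero_of_card_support_le (by omega), mul_zero]

theorem exists_lt_sum_mul_of_notMem_Cset {lam c : Fin n → ℝ} (hlam : ∀ i, 0 ≤ lam i)
    (hc₀ : ∀ i, 0 ≤ c i) (hc : c ∉ Cset lam) :
    ∃ d : Fin n → ℝ, (∀ i, 0 ≤ d i) ∧ (∀ i, c i = 0 → d i = 0) ∧
      Jlam lam d < ∑ i, c i * d i := by
  simp only [Cset, Set.mem_ofPred_eq, not_forall, not_le] at hc
  obtain ⟨k, hk⟩ := hc
  obtain ⟨σ, hσ⟩ := exists_perm_sortedAbs_eq c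
  set T := {i ∈ (Iic k).map σ.toEmbedding | c i ≠ 0}
  refine ⟨fun i => if i ∈ T then 1 else 0, fun i => by positivity,
    fun i hi => by simp [T, hi], ?_⟩
  have hsum : ∑ i, c i * (if i ∈ T then 1 else 0) = ∑ i with i ≤ k, sortedAbs c i := by
    calc ∑ i, c i * (if i ∈ T then 1 else 0) = ∑ i ∈ T, c i := by
          simp only [mul_ite, mul_one, mul_zero, sum_ite_mem, univ_inter]
      _ = ∑ i ∈ Iic k, c (σ i) := by rw [sum_filter_ne_zero, sum_map]; rfl
      _ = ∑ i with i ≤ k, sortedAbs c i := by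
          simp only [filter_ge_eq_Iic, hσ, abs_of_nonneg (hc₀ _)]
  have hcard : #{i | (if i ∈ T then (1 : ℝ) else 0) ≠ 0} ≤ k + 1 := by
    have hT : #T ≤ k + 1 := (card_filter_le _ _).trans_eq ((card_map _).trans (Fin.card_Iic k))
    simpa using hT
  rw [hsum]
  exact (Jlam_le_sum_of_card_support_le hlam (fun j => by split_ifs <;> simp) hcard).trans_lt hk

end Jlam

section GroupNorm

variable {p m : ℕ} (grp : Fin p → Fin m)

theorem groupNorm_nonneg (b : Fin p → ℝ) (t : Fin m) : 0 ≤ groupNorm grp b t :=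
  Real.sqrt_nonneg _

theorem groupNorm_sq (b : Fin p → ℝ) (t : Fin m) :
    groupNorm grp b t ^ 2 = ∑ j with grp j = t, b j ^ 2 :=
  Real.sq_sqrt (sum_nonneg fun _ _ => sq_nonneg _)

theorem groupNorm_mul_comp (a : Fin m → ℝ) (b : Fin p → ℝ) (t : Fin m) :
    groupNorm grp (fun j => a (grp j) * b j) t = |a t| * groupNorm grp b t := by
  have hsum : ∑ j with grp j = t, (a (grp j) * b j) ^ 2 =
      a t ^ 2 * ∑ j with grp j = t, b j ^ 2 := by
    rw [mul_sum]
    refine sum_congr rfl fun j hj => ?_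
    rw [(mem_filter.mp hj).2, mul_pow]
  rw [groupNorm, hsum, Real.sqrt_mul (sq_nonneg _), Real.sqrt_sq_eq_abs, groupNorm]

theorem groupNorm_smul (c : ℝ) (b : Fin p → ℝ) (t : Fin m) :
    groupNorm grp (c • b) t = |c| * groupNorm grp b t :=
  groupNorm_mul_comp grp (fun _ => c) b t

theorem sum_mul_mul_comp_eq_sum_groupNorm_sq (a : Fin m → ℝ) (x : Fin p → ℝ) :
    ∑ j, x j * (a (grp j) * x j) = ∑ t, a t * groupNorm grp x t ^ 2 := by
  rw [← sum_fiberwise univ grp]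
  refine sum_congr rfl fun t _ => ?_
  rw [groupNorm_sq, mul_sum]
  refine sum_congr rfl fun j hj => ?_
  rw [(mem_filter.mp hj).2]
  ring

theorem sum_mul_le_sum_groupNorm_mul (x b : Fin p → ℝ) :
    ∑ j, x j * b j ≤ ∑ t, groupNorm grp x t * groupNorm grp b t := by
  rw [← sum_fiberwise univ grp]
  exact sum_le_sum fun t _ => Real.sum_mul_le_sqrt_mul_sqrt _ x b

theorem exists_groupNorm_eq (x : Fin p → ℝ) {d : Fin m → ℝ} (hd₀ : ∀ t, 0 ≤ d t)
    (hd : ∀ t, groupNorm grp x t = 0 → d t = 0) :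
    ∃ b : Fin p → ℝ, groupNorm grp b = d ∧
      ∑ j, x j * b j = ∑ t, groupNorm grp x t * d t := by
  -- on groups where `x` vanishes, `a t = d t / 0 = 0`, consistently with `d t = 0`
  set a : Fin m → ℝ := fun t => d t / groupNorm grp x t
  refine ⟨fun j => a (grp j) * x j, funext fun t => ?_, ?_⟩
  · rw [groupNorm_mul_comp, abs_of_nonneg (div_nonneg (hd₀ t) (groupNorm_nonneg grp x t))]
    rcases eq_or_ne (groupNorm grp x t) 0 with h | h
    · simp [h, hd t h]
    · field_simp
  · rw [sum_mul_mul_comp_eq_sum_groupNorm_sq]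
    refine sum_congr rfl fun t _ => ?_
    rcases eq_or_ne (groupNorm grp x t) 0 with h | h
    · simp [h]
    · simp only [a]
      field_simp

end GroupNorm

def PosHomogeneous {E : Type*} [SMul ℝ E] (F : E → ℝ) : Prop :=
  ∀ t : ℝ, 0 ≤ t → ∀ b, F (t • b) = t * F b

namespace PosHomogeneous

variable {E : Type*} [SMul ℝ E] {F : E → ℝ}

theorem iSup_coe_eq_zero [Zero E] (hF : PosHomogeneous F) (h : ∀ b, F b ≤ 0) :
    ⨆ b, (F b : EReal) = 0 :=
  le_antisymm (iSup_le fun b => EReal.coe_nonpos.mpr (h b))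
    (le_iSup_of_le ((0 : ℝ) • (0 : E)) (by rw [hF 0 le_rfl, zero_mul, EReal.coe_zero]))

theorem iSup_coe_eq_top (hF : PosHomogeneous F) {b : E} (hb : 0 < F b) :
    ⨆ b, (F b : EReal) = ⊤ := by
  refine iSup_eq_top.mpr fun y hy => ?_
  obtain ⟨r, hyr, -⟩ := EReal.lt_iff_exists_real_btwn.mp hy
  have ht : 0 ≤ (|r| + 1) / F b := by positivity
  refine ⟨((|r| + 1) / F b) • b, hyr.trans ?_⟩
  rw [hF _ ht, div_mul_cancel₀ _ hb.ne', EReal.coe_lt_coe_iff]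
  linarith [le_abs_self r]

end PosHomogeneous

section WeightedGroupNorm

variable {p m : ℕ} (grp : Fin p → Fin m) (lam w : Fin m → ℝ) (x : Fin p → ℝ)

theorem posHomogeneous_sum_mul_sub_Jlam_groupNorm :
    PosHomogeneous fun b : Fin p → ℝ =>
      ∑ i, x i * b i - Jlam lam (fun i => w i * groupNorm grp b i) := by
  intro t ht b
  have hscale : (fun i => w i * groupNorm grp (t • b) i) =
      t • fun i => w i * groupNorm grp b i := by
    ext i
    simp only [groupNorm_smul, abs_of_nonneg ht, Pi.smul_apply, smul_eq_mul]
    ring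
  beta_reduce
  rw [hscale, Jlam_smul, abs_of_nonneg ht, mul_sub, mul_sum]
  congr 1
  exact sum_congr rfl fun i _ => by simp only [Pi.smul_apply, smul_eq_mul]; ring

variable {grp lam w x}

theorem sum_mul_le_Jlam_groupNorm_of_mem_Cset (hw : ∀ t, 0 < w t)
    (hx : (fun t => (w t)⁻¹ * groupNorm grp x t) ∈ Cset lam) (b : Fin p → ℝ) :
    ∑ j, x j * b j ≤ Jlam lam (fun t => w t * groupNorm grp b t) :=
  calc ∑ j, x j * b j ≤ ∑ t, groupNorm grp x t * groupNorm grp b t :=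
        sum_mul_le_sum_groupNorm_mul grp x b
    _ = ∑ t, (w t)⁻¹ * groupNorm grp x t * (w t * groupNorm grp b t) :=
        sum_congr rfl fun t _ => by field_simp [(hw t).ne']
    _ ≤ _ := sum_mul_le_Jlam_of_mem_Cset hx _

theorem exists_Jlam_groupNorm_lt_sum_mul_of_notMem_Cset (hlam : ∀ t, 0 ≤ lam t)
    (hw : ∀ t, 0 < w t) (hx : (fun t => (w t)⁻¹ * groupNorm grp x t) ∉ Cset lam) :
    ∃ b : Fin p → ℝ, Jlam lam (fun t => w t * groupNorm grp b t) < ∑ j, x j * b j := by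
  have hc₀ : ∀ t, 0 ≤ (w t)⁻¹ * groupNorm grp x t :=
    fun t => mul_nonneg (inv_nonneg.mpr (hw t).le) (groupNorm_nonneg grp x t)
  obtain ⟨d, hd₀, hdc, hlt⟩ := exists_lt_sum_mul_of_notMem_Cset hlam hc₀ hx
  obtain ⟨b, hb, hxb⟩ := exists_groupNorm_eq grp x (d := fun t => (w t)⁻¹ * d t)
    (fun t => mul_nonneg (inv_nonneg.mpr (hw t).le) (hd₀ t))
    (fun t h => by simp [hdc t (by simp [h])])
  have hwb : (fun t => w t * groupNorm grp b t) = d := by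
    ext t
    rw [hb]
    field_simp [(hw t).ne']
  refine ⟨b, ?_⟩
  rw [hwb, hxb]
  convert hlt using 2 with t
  ring

end WeightedGroupNorm

theorem groupSortedL1_conjugate_general {p m : ℕ} (grp : Fin p → Fin m)
    (lam : Fin m → ℝ)
    (hlam_nonneg : ∀ i, 0 ≤ lam i)
    (w : Fin m → ℝ) (hw : ∀ i, 0 < w i) :
    ∀ x : Fin p → ℝ,
      ((fun i => (w i)⁻¹ * groupNorm grp x i) ∈ Cset lam →
        (⨆ b : Fin p → ℝ,
          ((∑ i, x i * b i - Jlam lam (fun i => w i * groupNorm grp b i) : ℝ) : EReal)) = 0) ∧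
      ((fun i => (w i)⁻¹ * groupNorm grp x i) ∉ Cset lam →
        (⨆ b : Fin p → ℝ,
          ((∑ i, x i * b i - Jlam lam (fun i => w i * groupNorm grp b i) : ℝ) : EReal)) = ⊤) := by
  intro x
  have hF := posHomogeneous_sum_mul_sub_Jlam_groupNorm grp lam w x
  refine ⟨fun hx => hF.iSup_coe_eq_zero fun b => ?_, fun hx => ?_⟩
  · exact sub_nonpos.mpr (sum_mul_le_Jlam_groupNorm_of_mem_Cset hw hx b)
  · obtain ⟨b, hb⟩ := exists_Jlam_groupNorm_lt_sum_mul_of_notMem_Cset hlam_nonneg hw hx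
    exact hF.iSup_coe_eq_top (sub_pos.mpr hb)

/-- The convex conjugate of `J_{λ,I,W}(b) = J_λ(W⟦b⟧_I)` equals `0` on the set
`{x : W⁻¹⟦x⟧_I ∈ C_λ}` and `+∞` elsewhere. -/
theorem groupSortedL1_conjugate {p m : ℕ} (grp : Fin p → Fin m)
    (hgrp : Function.Surjective grp)
    (lam : Fin m → ℝ)
    (hlam_anti : ∀ i j : Fin m, i ≤ j → lam j ≤ lam i)
    (hlam_nonneg : ∀ i, 0 ≤ lam i)
    (hlam_ne : ∃ i, lam i ≠ 0)
    (w : Fin m → ℝ) (hw : ∀ i, 0 < w i) :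
    ∀ x : Fin p → ℝ,
      ((fun i => (w i)⁻¹ * groupNorm grp x i) ∈ Cset lam →
        (⨆ b : Fin p → ℝ,
          ((∑ i, x i * b i - Jlam lam (fun i => w i * groupNorm grp b i) : ℝ) : EReal)) = 0) ∧
      ((fun i => (w i)⁻¹ * groupNorm grp x i) ∉ Cset lam →
        (⨆ b : Fin p → ℝ,
          ((∑ i, x i * b i - Jlam lam (fun i => w i * groupNorm grp b i) : ℝ) : EReal)) = ⊤) :=
  groupSortedL1_conjugate_general grp lam hlam_nonneg w hw
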